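/- arXiv:math/0005302 — 2 statements merged into one kernel-verified Lean document; each statement's English description precedes it below -/
import Mathlib

section
/- Let L be a finitely generated group and R a normal subgroup of L such that every homomorphism from H = L/R to a finite group is trivial. Let U be a normal subgroup of L with U ≤ R and [R : U] finite, let U^L be the intersection of all finite-index subgroups of L containing U, and set U^R = U^L ∩ R. Then there exists a surjective group homomorphism from H₂(H, ℤ) onto the quotient group U^R/U. -/
/-- The kernel of the canonical presentation `FreeGroup G → G`. -/
def presentationKernel (G : Type*) [Group G] : Subgroup (FreeGroup G) :=
  (FreeGroup.lift (id : G → G)).ker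

/-- Numerator `R ⊓ [F, F]` of Hopf's formula. -/
def hopfNumerator (G : Type*) [Group G] : Subgroup (FreeGroup G) :=
  presentationKernel G ⊓ commutator (FreeGroup G)

/-- Denominator `[F, R]` of Hopf's formula. -/
def hopfDenominator (G : Type*) [Group G] : Subgroup (FreeGroup G) :=
  ⁅(⊤ : Subgroup (FreeGroup G)), presentationKernel G⁆

instance (G : Type*) [Group G] : (presentationKernel G).Normal := by
  unfold presentationKernel; infer_instance

instance (G : Type*) [Group G] : (hopfDenominator G).Normal := by
  unfold hopfDenominator; infer_instance

/-- The second integral homology `H₂(G, ℤ)` (Schur multiplier), via Hopf's formula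
`H₂(G) = (R ∩ [F, F]) / [F, R]` for the canonical presentation `1 → R → F → G → 1`. -/
def schurMultiplier (G : Type*) [Group G] : Type _ :=
  hopfNumerator G ⧸ (hopfDenominator G).subgroupOf (hopfNumerator G)

instance (G : Type*) [Group G] : Group (schurMultiplier G) := by
  unfold schurMultiplier; infer_instance

/-- The fiber product `L ×_{L/N} L = {(x, y) | x⁻¹ * y ∈ N}` as a subgroup of `L × L`. -/
def fiberProduct {L : Type*} [Group L] (N : Subgroup L) [N.Normal] : Subgroup (L × L) where
  carrier := {p | p.1⁻¹ * p.2 ∈ N}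
  one_mem' := by simpa using N.one_mem
  mul_mem' := by
    intro a b ha hb
    simp only [Set.mem_setOf_eq, ← QuotientGroup.eq] at *
    simp only [Prod.fst_mul, Prod.snd_mul, QuotientGroup.mk_mul, ha, hb]
  inv_mem' := by
    intro a ha
    simp only [Set.mem_setOf_eq, ← QuotientGroup.eq] at *
    simp only [Prod.fst_inv, Prod.snd_inv, QuotientGroup.mk_inv, ha]

/-- The closure of a subgroup `U` in the profinite topology of `L`: the intersection of
all finite-index subgroups of `L` containing `U`. -/
def profClosure {L : Type*} [Group L] (U : Subgroup L) : Subgroup L :=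
  ⨅ V ∈ {V : Subgroup L | V.FiniteIndex ∧ U ≤ V}, V

/-!
Write `P = U^L` and `K = ker (F → L/R)` for the canonical presentation by the free group `F`.
Since `L/R` has no nontrivial finite quotients, every finite-index normal subgroup `N ≥ U` has
`NR = L`, so `[L : N] = [R : R ∩ N] ≤ [R : U]`. A normal subgroup of maximal index among them lies
in every finite-index subgroup containing `U`; hence `P` has finite index and `PR = L`. As `R/U`
is finite, its centralizer in `L/U` has finite index, so `[P, R] ≤ U`.

Lift `F → L/R` to `φ : F → P`. Then `φ K ≤ R` and `φ [F, K] ≤ [P, R] ≤ U`, so Hopf's formula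
gives `H₂(L/R) → (P ∩ R)/U`. It is onto: for `z ∈ P ∩ R` the image of `z` in the finitely
generated group `L/U` lies in every finite-index subgroup, hence, finitely generated abelian
groups being residually finite, in the commutator subgroup of the finite-index subgroup
`φ(F)U/U`; thus `z ∈ φ([F, F] ∩ K) U`.
-/

instance AddCommGroup.residuallyFinite_of_fg (A : Type*) [AddCommGroup A] [AddGroup.FG A] :
    AddGroup.ResiduallyFinite A := by
  rw [AddGroup.residuallyFinite_iff_exists_finiteIndex]
  intro a ha
  obtain ⟨m, ι, _, p, hp, e, ⟨E⟩⟩ := AddCommGroup.equiv_free_prod_directSum_zmod A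
  by_cases hfree : (E a).1 = 0
  · have : ∀ i, NeZero (p i ^ e i) := fun i => ⟨pow_ne_zero _ (hp i).ne_zero⟩
    have : Finite (DirectSum ι fun i => ZMod (p i ^ e i)) :=
      Finite.of_equiv _ DFinsupp.equivFunOnFintype.symm
    let f := (AddMonoidHom.snd _ _).comp E.toAddMonoidHom
    refine ⟨f.ker, AddSubgroup.finiteIndex_ker f, fun hf => ha (E.injective ?_)⟩
    rw [map_zero]
    exact Prod.ext hfree hf
  · obtain ⟨i, hi⟩ := Finsupp.ne_iff.mp hfree
    let n := ((E a).1 i).natAbs.succ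
    let f := (Int.castAddHom (ZMod n)).comp <|
      (Finsupp.applyAddHom i).comp <| (AddMonoidHom.fst _ _).comp E.toAddMonoidHom
    refine ⟨f.ker, AddSubgroup.finiteIndex_ker f, fun hf => hi ?_⟩
    have hdvd : (n : ℤ) ∣ (E a).1 i := (ZMod.intCast_zmod_eq_zero_iff_dvd _ n).mp hf
    exact Int.eq_zero_of_dvd_of_natAbs_lt_natAbs hdvd <| by
      rw [Int.natAbs_natCast]
      exact Nat.lt_succ_self _

instance CommGroup.residuallyFinite_of_fg (G : Type*) [CommGroup G] [Group.FG G] :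
    Group.ResiduallyFinite G := by
  rw [Group.residuallyFinite_iff_forall_finiteIndex]
  intro g hg
  have : Additive.ofMul g = 0 := by
    refine AddGroup.residuallyFinite_iff_forall_finiteIndex.mp inferInstance _ fun B _ => ?_
    have : (AddSubgroup.toSubgroup' B).FiniteIndex := by
      rwa [← Subgroup.finiteIndex_toAddSubgroup_iff, OrderIso.apply_symm_apply]
    exact hg (AddSubgroup.toSubgroup' B)
  simpa using this

namespace Subgroup

variable {G : Type*} [Group G]

theorem finiteIndex_comap_of_surjective {G' : Type*} [Group G'] {f : G →* G'}
    (hf : Function.Surjective f) (H : Subgroup G') [H.FiniteIndex] : (H.comap f).FiniteIndex :=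
  ⟨index_comap_of_surjective H hf ▸ FiniteIndex.index_ne_zero⟩

theorem mem_commutator_of_forall_finiteIndex [Group.FG G] (M : Subgroup G) [M.FiniteIndex]
    {g : G} (hg : ∀ (W : Subgroup G) [W.FiniteIndex], g ∈ W) : g ∈ ⁅M, M⁆ := by
  have hgM : g ∈ M := hg M
  have hof : Function.Surjective (Abelianization.of : M →* Abelianization M) :=
    QuotientGroup.mk'_surjective _
  have : Group.FG (Abelianization M) := Group.fg_of_surjective hof
  have hβ : Abelianization.of (⟨g, hgM⟩ : M) = 1 := by
    refine Group.residuallyFinite_iff_forall_finiteIndex.mp inferInstance _ fun B _ => ?_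
    have := finiteIndex_comap_of_surjective hof B
    have : ((B.comap Abelianization.of).map M.subtype).FiniteIndex := by
      rw [finiteIndex_iff, index_map_subtype]
      exact mul_ne_zero FiniteIndex.index_ne_zero FiniteIndex.index_ne_zero
    obtain ⟨x, hx, rfl⟩ := hg ((B.comap Abelianization.of).map M.subtype)
    exact hx
  rw [← map_subtype_commutator, ← Abelianization.ker_of]
  exact ⟨⟨g, hgM⟩, hβ, rfl⟩

theorem index_eq_relIndex_of_sup_eq_top {V R : Subgroup G} [R.Normal] (h : V ⊔ R = ⊤) :
    V.index = V.relIndex R := by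
  rw [← relIndex_top_right, relIndex, relIndex]
  refine (Nat.card_congr (Equiv.ofBijective (quotientSubgroupOfEmbeddingOfLE V le_top)
    ⟨(quotientSubgroupOfEmbeddingOfLE V le_top).injective, ?_⟩)).symm
  intro x
  induction x using QuotientGroup.induction_on with | H g => ?_
  obtain ⟨g, -⟩ := g
  have hg : g ∈ (↑(R ⊔ V) : Set G) := by rw [sup_comm, h]; trivial
  obtain ⟨r, hr, v, hv, rfl⟩ := normal_mul R V ▸ hg
  refine ⟨QuotientGroup.mk ⟨r, hr⟩, ?_⟩
  rw [quotientSubgroupOfEmbeddingOfLE_apply_mk, QuotientGroup.eq, mem_subgroupOf]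
  simpa using hv

theorem index_dvd_relIndex_of_sup_eq_top {U V R : Subgroup G} [R.Normal] (hUV : U ≤ V)
    (h : V ⊔ R = ⊤) : V.index ∣ U.relIndex R :=
  index_eq_relIndex_of_sup_eq_top h ▸ relIndex_dvd_of_le_left R hUV

theorem sup_eq_top_iff_map_mk'_eq_top {V R : Subgroup G} [R.Normal] :
    V ⊔ R = ⊤ ↔ V.map (QuotientGroup.mk' R) = ⊤ := by
  have h := comap_map_eq (QuotientGroup.mk' R) V
  rw [QuotientGroup.ker_mk'] at h
  rw [← h, ← comap_top (QuotientGroup.mk' R),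
    (comap_injective (QuotientGroup.mk'_surjective R)).eq_iff]

theorem finiteIndex_centralizer_of_finite (A : Subgroup G) [A.Normal] [Finite A] :
    (centralizer (A : Set G)).FiniteIndex := by
  refine finiteIndex_of_le (H := (MulAut.conjNormal : G →* MulAut A).ker) fun g hg a ha => ?_
  have := congrArg (fun f : MulAut A => (f ⟨a, ha⟩ : G)) hg
  simp only [MulAut.conjNormal_apply, MulAut.one_apply] at this
  nth_rewrite 1 [← this]
  group

end Subgroup

section ProfiniteClosure

variable {L : Type*} [Group L] {U : Subgroup L}

theorem mem_profClosure_iff {x : L} :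
    x ∈ profClosure U ↔ ∀ V : Subgroup L, V.FiniteIndex → U ≤ V → x ∈ V := by
  simp only [profClosure, Subgroup.mem_iInf, Set.mem_ofPred_eq, and_imp]

theorem profClosure_le {V : Subgroup L} (hV : V.FiniteIndex) (hUV : U ≤ V) :
    profClosure U ≤ V :=
  fun _ hx => mem_profClosure_iff.mp hx V hV hUV

theorem QuotientGroup.mk_mem_of_mem_profClosure [U.Normal] {x : L} (hx : x ∈ profClosure U)
    (W : Subgroup (L ⧸ U)) [W.FiniteIndex] : (x : L ⧸ U) ∈ W := by
  refine profClosure_le (Subgroup.finiteIndex_comap_of_surjective (mk'_surjective U) W) ?_ hx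
  simpa using (mk' U).ker_le_comap W

theorem commutator_profClosure_le [U.Normal] {R : Subgroup L} [R.Normal]
    (hfin : (U.subgroupOf R).FiniteIndex) : ⁅profClosure U, R⁆ ≤ U := by
  let q := QuotientGroup.mk' U
  let A := R.map q
  have : A.Normal := Subgroup.Normal.map inferInstance q (QuotientGroup.mk'_surjective U)
  have : Finite A := by
    refine Nat.finite_of_card_ne_zero ?_
    rw [← Subgroup.relIndex_ker, QuotientGroup.ker_mk']
    exact hfin.index_ne_zero
  have hcent : profClosure U ≤ (Subgroup.centralizer (A : Set (L ⧸ U))).comap q := by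
    have := Subgroup.finiteIndex_centralizer_of_finite A
    refine profClosure_le (Subgroup.finiteIndex_comap_of_surjective
      (QuotientGroup.mk'_surjective U) _) ?_
    simpa [q] using q.ker_le_comap _
  rw [Subgroup.commutator_le]
  intro p hp r hr
  rw [← QuotientGroup.eq_one_iff, ← QuotientGroup.mk'_apply, map_commutatorElement,
    commutatorElement_eq_one_iff_mul_comm]
  exact (hcent hp (q r) ⟨r, hr, rfl⟩).symm

end ProfiniteClosure

section NoFiniteQuotients

variable {L : Type} [Group L] {R U : Subgroup L} [R.Normal]

theorem sup_eq_top_of_forall_finite_quotient_trivial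
    (hH : ∀ (F : Type) [Group F] [Finite F] (f : (L ⧸ R) →* F), f = 1)
    (N : Subgroup L) [N.Normal] [N.FiniteIndex] : N ⊔ R = ⊤ := by
  have : (N ⊔ R).FiniteIndex := Subgroup.finiteIndex_of_le le_sup_left
  let f := QuotientGroup.map R (N ⊔ R) (MonoidHom.id L) le_sup_right
  refine (Subgroup.eq_top_iff' _).mpr fun x => ?_
  rw [← QuotientGroup.eq_one_iff]
  exact (DFunLike.congr_fun (hH _ f) (x : L ⧸ R) :)

theorem profClosure_finiteIndex
    (hH : ∀ (F : Type) [Group F] [Finite F] (f : (L ⧸ R) →* F), f = 1)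
    [U.Normal] (hfin : (U.subgroupOf R).FiniteIndex) : (profClosure U).FiniteIndex := by
  let indices := {n | ∃ N : Subgroup L, N.Normal ∧ N.FiniteIndex ∧ U ≤ N ∧ N.index = n}
  have hbdd : BddAbove indices := by
    refine ⟨U.relIndex R, ?_⟩
    rintro _ ⟨N, _, _, hUN, rfl⟩
    exact Nat.le_of_dvd (Nat.pos_of_ne_zero hfin.index_ne_zero)
      (Subgroup.index_dvd_relIndex_of_sup_eq_top hUN
        (sup_eq_top_of_forall_finite_quotient_trivial hH N))
  obtain ⟨N₀, _, _, hUN₀, hN₀⟩ :=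
    Nat.sSup_mem (s := indices) ⟨_, ⊤, Subgroup.normal_top, inferInstance, le_top, rfl⟩ hbdd
  refine Subgroup.finiteIndex_of_le (H := N₀) fun x hx => mem_profClosure_iff.mpr ?_
  intro V _ hUV
  have hUV' : U ≤ N₀ ⊓ V.normalCore := le_inf hUN₀ (Subgroup.normal_le_normalCore.mpr hUV)
  have hle : (N₀ ⊓ V.normalCore).index ≤ N₀.index :=
    hN₀ ▸ le_csSup hbdd ⟨_, inferInstance, inferInstance, hUV', rfl⟩
  have heq : N₀ ⊓ V.normalCore = N₀ :=
    eq_of_le_of_not_lt inf_le_left fun hlt => (Subgroup.index_strictAnti hlt).not_ge hle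
  exact V.normalCore_le (inf_eq_left.mp heq hx)

theorem profClosure_sup_eq_top
    (hH : ∀ (F : Type) [Group F] [Finite F] (f : (L ⧸ R) →* F), f = 1)
    [U.Normal] (hfin : (U.subgroupOf R).FiniteIndex) : profClosure U ⊔ R = ⊤ := by
  have := profClosure_finiteIndex hH hfin
  exact eq_top_mono (sup_le_sup_right (profClosure U).normalCore_le R)
    (sup_eq_top_of_forall_finite_quotient_trivial hH _)

end NoFiniteQuotients

section HopfMap

variable {L : Type*} [Group L] {R P U : Subgroup L} [R.Normal] {φ : FreeGroup (L ⧸ R) →* L}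

theorem exists_lift_presentation_range_le (hPR : P ⊔ R = ⊤) :
    ∃ φ : FreeGroup (L ⧸ R) →* L,
      φ.range ≤ P ∧ (QuotientGroup.mk' R).comp φ = FreeGroup.lift id := by
  have hsec (h : L ⧸ R) : ∃ p ∈ P, QuotientGroup.mk' R p = h := by
    rw [← Subgroup.mem_map, Subgroup.sup_eq_top_iff_map_mk'_eq_top.mp hPR]
    trivial
  choose σ hσP hσ using hsec
  refine ⟨FreeGroup.lift σ, FreeGroup.range_lift_le (Set.range_subset_iff.mpr hσP), ?_⟩
  ext h
  simpa using hσ h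

theorem presentationKernel_eq_comap (hφ : (QuotientGroup.mk' R).comp φ = FreeGroup.lift id) :
    presentationKernel (L ⧸ R) = R.comap φ := by
  rw [presentationKernel, ← hφ, ← MonoidHom.comap_ker, QuotientGroup.ker_mk']

theorem range_sup_eq_top_of_lift (hφ : (QuotientGroup.mk' R).comp φ = FreeGroup.lift id) :
    φ.range ⊔ R = ⊤ := by
  rw [Subgroup.sup_eq_top_iff_map_mk'_eq_top, ← MonoidHom.range_comp, hφ, MonoidHom.range_eq_top]
  exact fun h => ⟨FreeGroup.of h, FreeGroup.lift_apply_of⟩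

theorem hopfDenominator_le_comap (hφ : (QuotientGroup.mk' R).comp φ = FreeGroup.lift id)
    (hφP : φ.range ≤ P) (hPR : ⁅P, R⁆ ≤ U) : hopfDenominator (L ⧸ R) ≤ U.comap φ := by
  rw [hopfDenominator, presentationKernel_eq_comap hφ, ← Subgroup.map_le_iff_le_comap,
    Subgroup.map_commutator, ← MonoidHom.range_eq_map]
  exact (Subgroup.commutator_mono hφP (Subgroup.map_comap_le φ R)).trans hPR

def hopfMap [U.Normal] (hφ : (QuotientGroup.mk' R).comp φ = FreeGroup.lift id) (hφP : φ.range ≤ P)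
    (hPR : ⁅P, R⁆ ≤ U) : schurMultiplier (L ⧸ R) →* ↥(P ⊓ R) ⧸ U.subgroupOf (P ⊓ R) :=
  QuotientGroup.lift _
    ((QuotientGroup.mk' _).comp ((φ.domRestrict (hopfNumerator (L ⧸ R))).codRestrict (P ⊓ R)
      fun x => ⟨hφP ⟨x, rfl⟩, (presentationKernel_eq_comap hφ).le x.2.1⟩))
    fun _ hx => (QuotientGroup.eq_one_iff _).mpr (hopfDenominator_le_comap hφ hφP hPR hx)

theorem hopfMap_surjective [Group.FG L] [U.Normal] (hUR : U ≤ R)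
    (hfin : (U.subgroupOf R).FiniteIndex) (hφ : (QuotientGroup.mk' R).comp φ = FreeGroup.lift id)
    (hφP : φ.range ≤ profClosure U)
    (hPR : ⁅profClosure U, R⁆ ≤ U) : Function.Surjective (hopfMap hφ hφP hPR) := by
  intro z
  induction z using QuotientGroup.induction_on with | H z => ?_
  obtain ⟨z, hz⟩ := z
  obtain ⟨hzP, hzR⟩ := Subgroup.mem_inf.mp hz
  let q := QuotientGroup.mk' U
  let M := φ.range.map q
  have : M.FiniteIndex := by
    rw [Subgroup.finiteIndex_iff,
      ← Subgroup.index_comap_of_surjective _ (QuotientGroup.mk'_surjective U),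
      Subgroup.comap_map_eq, QuotientGroup.ker_mk']
    refine ne_zero_of_dvd_ne_zero hfin.index_ne_zero
      (Subgroup.index_dvd_relIndex_of_sup_eq_top le_sup_right ?_)
    exact eq_top_mono (sup_le_sup_right le_sup_left R) (range_sup_eq_top_of_lift hφ)
  have hzM : (z : L ⧸ U) ∈ ⁅M, M⁆ :=
    Subgroup.mem_commutator_of_forall_finiteIndex M (QuotientGroup.mk_mem_of_mem_profClosure hzP)
  have hMM : ⁅M, M⁆ = (commutator (FreeGroup (L ⧸ R))).map (q.comp φ) := by
    rw [commutator_def, Subgroup.map_commutator, ← MonoidHom.range_eq_map, MonoidHom.range_comp]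
  obtain ⟨y, hy, hyz⟩ := hMM ▸ hzM
  have hu : (φ y)⁻¹ * z ∈ U := QuotientGroup.eq.mp hyz
  have hyR : φ y ∈ R := by simpa using mul_mem hzR (inv_mem (hUR hu))
  refine ⟨QuotientGroup.mk ⟨y, (presentationKernel_eq_comap hφ).ge hyR, hy⟩, ?_⟩
  exact QuotientGroup.eq.mpr hu

end HopfMap

/-- Let `L` be finitely generated, `R ◁ L` with `H = L/R` having no
nontrivial finite quotients, and `U ◁ L` with `U ≤ R` of finite index in `R`.  With
`U^R = U^L ∩ R`, there is a surjection `H₂(H, ℤ) ↠ U^R / U`. -/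
theorem exists_schur_surjection {L : Type} [Group L] (hfg : Group.FG L)
    (R : Subgroup L) [R.Normal]
    (hH : ∀ (F : Type) [Group F] [Finite F] (f : (L ⧸ R) →* F), f = 1)
    (U : Subgroup L) [U.Normal] (hUR : U ≤ R) (hfin : (U.subgroupOf R).FiniteIndex) :
    ∃ f : schurMultiplier (L ⧸ R) →*
        (↥(profClosure U ⊓ R) ⧸ U.subgroupOf (profClosure U ⊓ R)),
      Function.Surjective f := by
  obtain ⟨φ, hφP, hφ⟩ := exists_lift_presentation_range_le (profClosure_sup_eq_top hH hfin)
  have hPR := commutator_profClosure_le hfin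
  exact ⟨hopfMap hφ hφP hPR, hopfMap_surjective hUR hfin hφ hφP hPR⟩
end

section
/- Let u : Γ₁ → Γ be a group homomorphism inducing an isomorphism of profinite completions, i.e. for every finite group F the map Hom(Γ, F) → Hom(Γ₁, F), φ ↦ φ ∘ u, is bijective. Let M be a finite-index subgroup of Γ and M₁ = u⁻¹(M). Then the restriction of u to M₁, viewed as a homomorphism M₁ → M, also induces an isomorphism of profinite completions: for every finite group F the map Hom(M, F) → Hom(M₁, F), ψ ↦ ψ ∘ (u restricted to M₁), is bijective. -/
/-!
Bijectivity of `φ ↦ φ.comp u` on homomorphisms to finite groups amounts to two statements about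
finite-index subgroups: the image of `u` is dense for the profinite topology of `Γ` (this is
injectivity), and the profinite topology of `Γ₁` is pulled back from `Γ` along `u` (with
density, every `ψ : Γ₁ →* F` then factors through a finite quotient `Γ ⧸ N`: surjectivity).
Both statements pass to the restriction `u⁻¹(M) → M`, because a finite-index subgroup of `M`,
resp. of `u⁻¹(M)`, still has finite index in `Γ`, resp. `Γ₁`.
-/

open Function

namespace Subgroup

variable {G G' : Type*} [Group G] [Group G']

instance finiteIndex_comap (f : G' →* G) (H : Subgroup G) [H.FiniteIndex] :
    (H.comap f).FiniteIndex :=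
  ⟨by rw [index_comap]; exact (isFiniteRelIndex_of_finiteIndex (K := f.range)).relIndex_ne_zero⟩

instance finiteIndex_map_subtype (H : Subgroup G) [H.FiniteIndex] (K : Subgroup H)
    [K.FiniteIndex] : (K.map H.subtype).FiniteIndex :=
  ⟨by
    rw [index_map_subtype]
    exact mul_ne_zero FiniteIndex.index_ne_zero FiniteIndex.index_ne_zero⟩

end Subgroup

namespace MonoidHom

variable {Γ₁ Γ : Type} [Group Γ₁] [Group Γ]

def InducesProfiniteIso (u : Γ₁ →* Γ) : Prop :=
  ∀ (F : Type) [Group F] [Finite F], Bijective (fun φ : Γ →* F => φ.comp u)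

/-- `u` has dense image for the profinite topologies. -/
def IsProfinitelyDense (u : Γ₁ →* Γ) : Prop :=
  ∀ (A : Subgroup Γ) [A.FiniteIndex] (g : Γ), ∃ g₁ : Γ₁, (u g₁)⁻¹ * g ∈ A

/-- The profinite topology of `Γ₁` is induced from that of `Γ` along `u`. -/
def IsProfinitelyInducing (u : Γ₁ →* Γ) : Prop :=
  ∀ (K : Subgroup Γ₁) [K.FiniteIndex], ∃ A : Subgroup Γ, A.FiniteIndex ∧ A.comap u ≤ K

variable {u : Γ₁ →* Γ}

theorem InducesProfiniteIso.surjective_comp (hu : u.InducesProfiniteIso) {Q : Type} [Group Q]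
    [Finite Q] {π : Γ →* Q} (hπ : Surjective π) : Surjective (π.comp u) := by
  obtain ⟨φ, hφ⟩ := (hu (π.comp u).range).2 (π.comp u).rangeRestrict
  have hφπ : (π.comp u).range.subtype.comp φ = π :=
    (hu Q).1 (by simp only [comp_assoc, hφ, subtype_comp_rangeRestrict])
  intro q
  obtain ⟨g, rfl⟩ := hπ q
  obtain ⟨g₁, hg₁⟩ := (φ g).2
  exact ⟨g₁, hg₁.trans (DFunLike.congr_fun hφπ g)⟩

theorem InducesProfiniteIso.isProfinitelyDense (hu : u.InducesProfiniteIso) :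
    u.IsProfinitelyDense := by
  intro A _ g
  obtain ⟨g₁, hg₁⟩ := hu.surjective_comp (QuotientGroup.mk'_surjective A.normalCore) g
  exact ⟨g₁, A.normalCore_le (QuotientGroup.eq.mp hg₁)⟩

theorem InducesProfiniteIso.isProfinitelyInducing (hu : u.InducesProfiniteIso) :
    u.IsProfinitelyInducing := by
  intro K _
  obtain ⟨φ, hφ : φ.comp u = _⟩ :=
    (hu (Γ₁ ⧸ K.normalCore)).2 (QuotientGroup.mk' K.normalCore)
  refine ⟨φ.ker, inferInstance, ?_⟩
  rw [comap_ker, hφ, QuotientGroup.ker_mk']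
  exact K.normalCore_le

theorem IsProfinitelyDense.injective_comp (hd : u.IsProfinitelyDense) (F : Type*) [Group F]
    [Finite F] : Injective (fun φ : Γ →* F => φ.comp u) := by
  intro φ φ' h
  ext g
  obtain ⟨g₁, hg₁⟩ := hd (φ.ker ⊓ φ'.ker) g
  simp only [Subgroup.mem_inf, mem_ker, map_mul, map_inv, inv_mul_eq_one] at hg₁
  rw [← hg₁.1, ← hg₁.2]
  exact DFunLike.congr_fun h g₁

theorem IsProfinitelyInducing.surjective_comp (hi : u.IsProfinitelyInducing)
    (hd : u.IsProfinitelyDense) (F : Type*) [Group F] [Finite F] :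
    Surjective (fun φ : Γ →* F => φ.comp u) := by
  intro ψ
  obtain ⟨A, _, hA⟩ := hi ψ.ker
  let f := (QuotientGroup.mk' A.normalCore).comp u
  have hf : Surjective f := by
    rintro ⟨g⟩
    obtain ⟨g₁, hg₁⟩ := hd A.normalCore g
    exact ⟨g₁, QuotientGroup.eq.mpr hg₁⟩
  have hker : f.ker ≤ ψ.ker := by
    rw [← comap_ker, QuotientGroup.ker_mk']
    exact (Subgroup.comap_mono A.normalCore_le).trans hA
  exact ⟨(f.liftOfSurjective hf ⟨ψ, hker⟩).comp (QuotientGroup.mk' A.normalCore),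
    f.liftOfRightInverse_comp _ (rightInverse_surjInv hf) ⟨ψ, hker⟩⟩

theorem inducesProfiniteIso_iff :
    u.InducesProfiniteIso ↔ u.IsProfinitelyDense ∧ u.IsProfinitelyInducing :=
  ⟨fun hu => ⟨hu.isProfinitelyDense, hu.isProfinitelyInducing⟩,
    fun ⟨hd, hi⟩ F _ _ => ⟨hd.injective_comp F, hi.surjective_comp hd F⟩⟩

theorem IsProfinitelyDense.subgroupComap (hd : u.IsProfinitelyDense) (M : Subgroup Γ)
    [M.FiniteIndex] : (u.subgroupComap M).IsProfinitelyDense := by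
  intro E _ m
  obtain ⟨g₁, hg₁⟩ := hd (E.map M.subtype) m
  have hg₁M : u g₁ ∈ M := by
    simpa using M.mul_mem m.2 (M.inv_mem (Subgroup.map_subtype_le E hg₁))
  refine ⟨⟨g₁, hg₁M⟩, ?_⟩
  rw [← Subgroup.mem_map_iff_mem M.subtype_injective]
  exact hg₁

theorem IsProfinitelyInducing.subgroupComap (hi : u.IsProfinitelyInducing) (M : Subgroup Γ)
    [(M.comap u).FiniteIndex] : (u.subgroupComap M).IsProfinitelyInducing := by
  intro K _
  obtain ⟨A, _, hA⟩ := hi (K.map (M.comap u).subtype)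
  exact ⟨A.subgroupOf M, inferInstance, fun x hx =>
    (Subgroup.mem_map_iff_mem (Subgroup.subtype_injective _)).mp (hA hx)⟩

end MonoidHom

/-- Let `u : Γ₁ → Γ` induce an isomorphism of profinite completions,
`M ≤ Γ` of finite index, `M₁ = u⁻¹(M)`.  Then the restriction `M₁ → M` of `u` also
induces an isomorphism of profinite completions. -/
theorem restrict_profinite_iso {Γ₁ Γ : Type} [Group Γ₁] [Group Γ] (u : Γ₁ →* Γ)
    (hu : ∀ (F : Type) [Group F] [Finite F],
      Function.Bijective (fun φ : Γ →* F => φ.comp u))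
    (M : Subgroup Γ) (hM : M.FiniteIndex) :
    ∀ (F : Type) [Group F] [Finite F],
      Function.Bijective (fun ψ : M →* F =>
        ψ.comp ((u.domRestrict (M.comap u)).codRestrict M fun x => x.2)) := by
  obtain ⟨hd, hi⟩ := MonoidHom.inducesProfiniteIso_iff.mp hu
  exact MonoidHom.inducesProfiniteIso_iff.mpr ⟨hd.subgroupComap M, hi.subgroupComap M⟩
end
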